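/- arXiv:1601.05283 — 2 statements merged into one kernel-verified Lean document; each statement's English description precedes it below -/
import Mathlib

section
/- (Soundness of Transitivity for promotional marketing) For any social network N = (𝒜, w, λ, θ), any non-negative reals p and q, and all subsets A, B, and C of 𝒜: if N ⊨ A ▷_p B and N ⊨ B ▷_q C under the promotional semantics, then N ⊨ A ▷_{p+q} C under the promotional semantics. -/
open scoped BigOperators Classical

/-- A social network on a (finite) set of agents: influence weights `w` (non-negative),
propensity `lam` and threshold `thr`. -/
structure SocialNetwork (Agent : Type) where
  w : Agent → Agent → ℝ
  w_nonneg : ∀ a b, 0 ≤ w a b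
  lam : Agent → ℝ
  thr : Agent → ℝ

/-- A spending function maps each agent to a non-negative real. -/
def IsSpending {Agent : Type} (s : Agent → ℝ) : Prop := ∀ a, 0 ≤ s a

/-- The diffusion chain `Aⁿ_s`: `A⁰_s = A` and
`Aⁿ⁺¹_s = Aⁿ_s ∪ { b : λ(b)·s(b) + Σ_{a∈Aⁿ_s} w(a,b) ≥ θ(b) }`. -/
noncomputable def diffuse {Agent : Type} [Fintype Agent] (N : SocialNetwork Agent)
    (s : Agent → ℝ) (A : Set Agent) : ℕ → Set Agent
  | 0 => A
  | n + 1 =>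
      diffuse N s A n ∪
        {b : Agent |
          N.lam b * s b +
              ∑ a ∈ Finset.univ.filter (fun a => a ∈ diffuse N s A n), N.w a b ≥
            N.thr b}

/-- `A*_s = ⋃_{n ≥ 0} Aⁿ_s`. -/
noncomputable def diffuseStar {Agent : Type} [Fintype Agent] (N : SocialNetwork Agent)
    (s : Agent → ℝ) (A : Set Agent) : Set Agent :=
  ⋃ n : ℕ, diffuse N s A n

/-- `‖s‖ = Σ_{a ∈ 𝒜} s(a)`. -/
noncomputable def budget {Agent : Type} [Fintype Agent] (s : Agent → ℝ) : ℝ :=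
  ∑ a, s a

/-- The combination `s₁ ⊕_λ s₂` of two spending functions. -/
noncomputable def oplus {Agent : Type} (lam : Agent → ℝ) (s₁ s₂ : Agent → ℝ) :
    Agent → ℝ :=
  fun a => if 0 ≤ lam a then s₁ a + s₂ a else 0

/-- Promotional semantics of the atom `A ▷_p B`: there is a marketing campaign with
budget at most `p` that guarantees that `A` influences `B`. -/
def PromoSat {Agent : Type} [Fintype Agent] (N : SocialNetwork Agent)
    (A : Set Agent) (p : ℝ) (B : Set Agent) : Prop :=
  ∃ s : Agent → ℝ, IsSpending s ∧ budget s ≤ p ∧ B ⊆ diffuseStar N s A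

/-- Preventive semantics of the atom `A ▷_p B`: for every marketing campaign with
budget at most `p`, the set `A` influences the set `B`. -/
def PrevSat {Agent : Type} [Fintype Agent] (N : SocialNetwork Agent)
    (A : Set Agent) (p : ℝ) (B : Set Agent) : Prop :=
  ∀ s : Agent → ℝ, IsSpending s → budget s ≤ p → B ⊆ diffuseStar N s A

lemma diffuse_mono_le {Agent : Type} [Fintype Agent] (N : SocialNetwork Agent)
    (s : Agent → ℝ) (A : Set Agent) {m n : ℕ} (h : m ≤ n) :
    diffuse N s A m ⊆ diffuse N s A n := by
  induction n with
  | zero => simp_all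
  | succ n ih =>
    rcases Nat.lt_or_ge m (n+1) with h' | h'
    · exact (ih (Nat.lt_succ_iff.mp h')).trans (Set.subset_union_left)
    · have : m = n + 1 := le_antisymm h h'
      subst this; exact subset_rfl

lemma diffuse_mono {Agent : Type} [Fintype Agent] (N : SocialNetwork Agent)
    {s s' : Agent → ℝ} {A A' : Set Agent}
    (hs : ∀ b, N.lam b * s b ≤ N.lam b * s' b) (hA : A ⊆ A') :
    ∀ n, diffuse N s A n ⊆ diffuse N s' A' n := by
  intro n
  induction n with
  | zero => exact hA
  | succ n ih =>
    intro b hb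
    rcases hb with hb | hb
    · exact Or.inl (ih hb)
    · right
      simp only [Set.mem_setOf_eq, ge_iff_le] at hb ⊢
      refine le_trans hb (add_le_add (hs b) ?_)
      apply Finset.sum_le_sum_of_subset_of_nonneg
      · intro a ha
        simp only [Finset.mem_filter, Finset.mem_univ, true_and] at ha ⊢
        exact ih ha
      · intro a _ _; exact N.w_nonneg a b

lemma star_trans {Agent : Type} [Fintype Agent] (N : SocialNetwork Agent)
    (s : Agent → ℝ) {A B : Set Agent} (hB : B ⊆ diffuseStar N s A) :
    diffuseStar N s B ⊆ diffuseStar N s A := by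
  have key : ∀ n, diffuse N s B n ⊆ diffuseStar N s A := by
    intro n
    induction n with
    | zero => exact hB
    | succ n ih =>
      intro b hb
      rcases hb with hb | hb
      · exact ih hb
      · simp only [Set.mem_setOf_eq, ge_iff_le] at hb
        set F := Finset.univ.filter (fun a => a ∈ diffuse N s B n) with hF
        have hex : ∀ a ∈ F, ∃ m, a ∈ diffuse N s A m := by
          intro a ha
          simp only [hF, Finset.mem_filter, Finset.mem_univ, true_and] at ha
          exact Set.mem_iUnion.mp (ih ha)
        choose f hf using hex
        set M := F.attach.sup (fun a => f a.1 a.2) with hM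
        have hsub : ∀ a ∈ F, a ∈ diffuse N s A M := by
          intro a ha
          exact diffuse_mono_le N s A
            (Finset.le_sup (f := fun x : {x // x ∈ F} => f x.1 x.2)
              (Finset.mem_attach F ⟨a, ha⟩)) (hf a ha)
        have : b ∈ diffuse N s A (M + 1) := by
          right
          simp only [Set.mem_setOf_eq, ge_iff_le]
          refine le_trans hb (add_le_add le_rfl ?_)
          apply Finset.sum_le_sum_of_subset_of_nonneg
          · intro a ha
            simp only [Finset.mem_filter, Finset.mem_univ, true_and]
            exact hsub a ha
          · intro a _ _; exact N.w_nonneg a b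
        exact Set.mem_iUnion.mpr ⟨M + 1, this⟩
  intro c hc
  rcases Set.mem_iUnion.mp hc with ⟨n, hn⟩
  exact key n hn

/-- Soundness of Transitivity for promotional marketing:
if `N ⊨ A ▷_p B` and `N ⊨ B ▷_q C` then `N ⊨ A ▷_{p+q} C`. -/
theorem promo_transitivity_sound {Agent : Type} [Fintype Agent] (N : SocialNetwork Agent)
    (p q : ℝ) (hp : 0 ≤ p) (hq : 0 ≤ q) (A B C : Set Agent)
    (hAB : PromoSat N A p B) (hBC : PromoSat N B q C) :
    PromoSat N A (p + q) C := by
  obtain ⟨s₁, hs₁, hb₁, hAB⟩ := hAB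
  obtain ⟨s₂, hs₂, hb₂, hBC⟩ := hBC
  set s := oplus N.lam s₁ s₂ with hsdef
  have hspend : IsSpending s := by
    intro a
    simp only [hsdef, oplus]
    split
    · exact add_nonneg (hs₁ a) (hs₂ a)
    · exact le_rfl
  have hbud : budget s ≤ p + q := by
    have : budget s ≤ budget s₁ + budget s₂ := by
      unfold budget
      rw [← Finset.sum_add_distrib]
      apply Finset.sum_le_sum
      intro a _
      simp only [hsdef, oplus]
      split
      · exact le_rfl
      · exact add_nonneg (hs₁ a) (hs₂ a)
    linarith [add_le_add hb₁ hb₂]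
  have hlam : ∀ s' : Agent → ℝ, IsSpending s' → s' = s₁ ∨ s' = s₂ →
      ∀ b, N.lam b * s' b ≤ N.lam b * s b := by
    intro s' hs' hcase b
    simp only [hsdef, oplus]
    by_cases hl : 0 ≤ N.lam b
    · simp only [if_pos hl]
      apply mul_le_mul_of_nonneg_left _ hl
      rcases hcase with rfl | rfl
      · linarith [hs₂ b]
      · linarith [hs₁ b]
    · simp only [if_neg hl, mul_zero]
      exact mul_nonpos_of_nonpos_of_nonneg (le_of_not_ge hl) (hs' b)
  have hstar₁ : diffuseStar N s₁ A ⊆ diffuseStar N s A := by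
    intro x hx
    rcases Set.mem_iUnion.mp hx with ⟨n, hn⟩
    exact Set.mem_iUnion.mpr ⟨n,
      diffuse_mono N (hlam s₁ hs₁ (Or.inl rfl)) subset_rfl n hn⟩
  have hstar₂ : diffuseStar N s₂ B ⊆ diffuseStar N s B := by
    intro x hx
    rcases Set.mem_iUnion.mp hx with ⟨n, hn⟩
    exact Set.mem_iUnion.mpr ⟨n,
      diffuse_mono N (hlam s₂ hs₂ (Or.inr rfl)) subset_rfl n hn⟩
  refine ⟨s, hspend, hbud, ?_⟩
  exact hBC.trans (hstar₂.trans (star_trans N s (hAB.trans hstar₁)))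
end

section
/- (Soundness of the logic of preventive marketing) For any finite set 𝒜 and any formula φ ∈ Φ(𝒜): if φ is derivable in the preventive proof system (⊢ φ), then N ⊨ φ under the preventive semantics for every social network N = (𝒜, w, λ, θ). -/
open scoped BigOperators Classical

/-- The language `Φ(𝒜)`: atoms `A ▷_p B` (with `A B ⊆ 𝒜` and `p` a non-negative real),
closed under negation and implication. -/
inductive Formula (Agent : Type) : Type where
  | atom : Set Agent → NNReal → Set Agent → Formula Agent
  | neg : Formula Agent → Formula Agent
  | imp : Formula Agent → Formula Agent → Formula Agent

/-- Evaluation of a formula under a propositional valuation of its atoms. -/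
def evalWith {Agent : Type} (v : Set Agent → NNReal → Set Agent → Prop) :
    Formula Agent → Prop
  | .atom A p B => v A p B
  | .neg φ => ¬ evalWith v φ
  | .imp φ ψ => evalWith v φ → evalWith v ψ

/-- A propositional tautology in the language `Φ(𝒜)`. -/
def Tautology {Agent : Type} (φ : Formula Agent) : Prop :=
  ∀ v : Set Agent → NNReal → Set Agent → Prop, evalWith v φ

/-- Promotional satisfaction relation `N ⊨ φ`. -/
def PromoSatisfies {Agent : Type} [Fintype Agent] (N : SocialNetwork Agent) :
    Formula Agent → Prop
  | .atom A p B =>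
      ∃ s : Agent → ℝ, IsSpending s ∧ budget s ≤ (p : ℝ) ∧ B ⊆ diffuseStar N s A
  | .neg φ => ¬ PromoSatisfies N φ
  | .imp φ ψ => PromoSatisfies N φ → PromoSatisfies N ψ

/-- Preventive satisfaction relation `N ⊨ φ`. -/
def PrevSatisfies {Agent : Type} [Fintype Agent] (N : SocialNetwork Agent) :
    Formula Agent → Prop
  | .atom A p B =>
      ∀ s : Agent → ℝ, IsSpending s → budget s ≤ (p : ℝ) → B ⊆ diffuseStar N s A
  | .neg φ => ¬ PrevSatisfies N φ
  | .imp φ ψ => PrevSatisfies N φ → PrevSatisfies N ψ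

/-- Derivability `⊢ φ` in the proof system for promotional marketing:
propositional tautologies, Reflexivity, Augmentation, Transitivity, Modus Ponens. -/
inductive PromoDeriv {Agent : Type} : Formula Agent → Prop where
  | taut {φ : Formula Agent} : Tautology φ → PromoDeriv φ
  | refl {A B : Set Agent} (p : NNReal) (h : B ⊆ A) : PromoDeriv (.atom A p B)
  | aug (A B C : Set Agent) (p : NNReal) :
      PromoDeriv (.imp (.atom A p B) (.atom (A ∪ C) p (B ∪ C)))
  | trans (A B C : Set Agent) (p q : NNReal) :
      PromoDeriv (.imp (.atom A p B) (.imp (.atom B q C) (.atom A (p + q) C)))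
  | mp {φ ψ : Formula Agent} : PromoDeriv (.imp φ ψ) → PromoDeriv φ → PromoDeriv ψ

/-- Derivability `⊢ φ` in the proof system for preventive marketing:
propositional tautologies, Reflexivity, Augmentation, Transitivity, Monotonicity,
Modus Ponens. -/
inductive PrevDeriv {Agent : Type} : Formula Agent → Prop where
  | taut {φ : Formula Agent} : Tautology φ → PrevDeriv φ
  | refl {A B : Set Agent} (p : NNReal) (h : B ⊆ A) : PrevDeriv (.atom A p B)
  | aug (A B C : Set Agent) (p : NNReal) :
      PrevDeriv (.imp (.atom A p B) (.atom (A ∪ C) p (B ∪ C)))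
  | trans (A B C : Set Agent) (p : NNReal) :
      PrevDeriv (.imp (.atom A p B) (.imp (.atom B p C) (.atom A p C)))
  | mono (A B : Set Agent) {p q : NNReal} (h : q ≤ p) :
      PrevDeriv (.imp (.atom A p B) (.atom A q B))
  | mp {φ ψ : Formula Agent} : PrevDeriv (.imp φ ψ) → PrevDeriv φ → PrevDeriv ψ

/-- Transport of a formula along a map of agents (inclusion of `𝒜₀` into `𝒜`). -/
def Formula.map {α β : Type} (f : α → β) : Formula α → Formula β
  | .atom A p B => .atom (f '' A) p (f '' B)
  | .neg φ => .neg (Formula.map f φ)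
  | .imp φ ψ => .imp (Formula.map f φ) (Formula.map f ψ)

section Aux

variable {Agent : Type} [Fintype Agent] (N : SocialNetwork Agent) (s : Agent → ℝ)

lemma diffuse_succ_subset (A : Set Agent) (n : ℕ) :
    diffuse N s A n ⊆ diffuse N s A (n + 1) := by
  intro x hx; exact Or.inl hx

lemma diffuse_mono_n (A : Set Agent) : Monotone (diffuse N s A) :=
  monotone_nat_of_le_succ (fun n => diffuse_succ_subset N s A n)

lemma diffuse_subset_star (A : Set Agent) (n : ℕ) :
    diffuse N s A n ⊆ diffuseStar N s A :=
  Set.subset_iUnion (diffuse N s A) n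

lemma sum_w_mono {S T : Set Agent} (hST : S ⊆ T) (b : Agent) :
    ∑ a ∈ Finset.univ.filter (fun a => a ∈ S), N.w a b ≤
      ∑ a ∈ Finset.univ.filter (fun a => a ∈ T), N.w a b := by
  refine Finset.sum_le_sum_of_subset_of_nonneg ?_ ?_
  · intro a ha
    simp only [Finset.mem_filter] at ha ⊢
    exact ⟨ha.1, hST ha.2⟩
  · intro a _ _; exact N.w_nonneg a b

lemma diffuse_mono_set {A B : Set Agent} (hAB : A ⊆ B) (n : ℕ) :
    diffuse N s A n ⊆ diffuse N s B n := by
  induction n with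
  | zero => exact hAB
  | succ n ih =>
    intro x hx
    rcases hx with hx | hx
    · exact Or.inl (ih hx)
    · refine Or.inr ?_
      simp only [Set.mem_setOf_eq, ge_iff_le] at hx ⊢
      exact hx.trans (add_le_add_right (sum_w_mono N ih x) _)

lemma diffuse_subset_of_subset_star {A B : Set Agent}
    (hB : B ⊆ diffuseStar N s A) (n : ℕ) :
    diffuse N s B n ⊆ diffuseStar N s A := by
  induction n with
  | zero => exact hB
  | succ n ih =>
    classical
    set S := Finset.univ.filter (fun a => a ∈ diffuse N s B n) with hS
    have hex : ∀ a ∈ S, ∃ m : ℕ, a ∈ diffuse N s A m := by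
      intro a ha
      have ha' : a ∈ diffuseStar N s A := by
        refine ih ?_
        simpa [hS] using ha
      simpa [diffuseStar] using ha'
    choose g hg using hex
    set M := S.attach.sup (fun x => g x.1 x.2) with hM
    have hsub : diffuse N s B n ⊆ diffuse N s A M := by
      intro a ha
      have ha' : a ∈ S := by simpa [hS] using ha
      have hle : g a ha' ≤ M := by
        have := Finset.le_sup (f := fun x : {x // x ∈ S} => g x.1 x.2)
          (Finset.mem_attach S ⟨a, ha'⟩)
        simpa using this
      exact diffuse_mono_n N s A hle (hg a ha')
    intro x hx
    rcases hx with hx | hx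
    · exact ih hx
    · refine diffuse_subset_star N s A (M + 1) ?_
      refine Or.inr ?_
      simp only [Set.mem_setOf_eq, ge_iff_le] at hx ⊢
      exact hx.trans (add_le_add_right (sum_w_mono N hsub x) _)

lemma star_of_star {A B : Set Agent} (hB : B ⊆ diffuseStar N s A) :
    diffuseStar N s B ⊆ diffuseStar N s A := by
  intro x hx
  rcases Set.mem_iUnion.mp hx with ⟨n, hn⟩
  exact diffuse_subset_of_subset_star N s hB n hn

lemma prevSat_eval (φ : Formula Agent) :
    PrevSatisfies N φ ↔
      evalWith (fun A p B => PrevSatisfies N (.atom A p B)) φ := by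
  induction φ with
  | atom A p B => rfl
  | neg φ ih => simp [PrevSatisfies, evalWith, ih]
  | imp φ ψ ih1 ih2 => simp [PrevSatisfies, evalWith, ih1, ih2]

end Aux

/-- Soundness of the logic of preventive marketing. -/
theorem prev_soundness {Agent : Type} [Fintype Agent] (φ : Formula Agent)
    (h : PrevDeriv φ) :
    ∀ N : SocialNetwork Agent, PrevSatisfies N φ := by
  induction h with
  | taut ht =>
    intro N
    exact (prevSat_eval N _).mpr (ht _)
  | refl p hBA =>
    intro N s _ _
    exact fun x hx => diffuse_subset_star N s _ 0 (hBA hx)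
  | aug A B C p =>
    intro N hAB s hs hb
    intro x hx
    rcases hx with hx | hx
    · rcases Set.mem_iUnion.mp (hAB s hs hb hx) with ⟨n, hn⟩
      exact diffuse_subset_star N s _ n
        (diffuse_mono_set N s Set.subset_union_left n hn)
    · exact diffuse_subset_star N s _ 0 (Or.inr hx)
  | trans A B C p =>
    intro N hAB hBC s hs hb
    exact fun x hx => star_of_star N s (hAB s hs hb) (hBC s hs hb hx)
  | mono A B hqp =>
    intro N hAB s hs hb
    exact hAB s hs (hb.trans (by exact_mod_cast hqp))
  | mp _ _ ih1 ih2 =>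
    intro N
    exact ih1 N (ih2 N)
end
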